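/- Let p be an odd prime, G a finite abelian p-group, f, g ∈ Hom(G, F_p) linearly independent, and let σ be an automorphism of G and λ ∈ F_p^*. If f', g' ∈ Hom(G, F_p) are linearly independent with [f' ∪ g'] = [λ (f∘σ^{-1}) ∪ (g∘σ^{-1})] in H^2(G; F_p), then σ(ker f ∩ ker g) = ker f' ∩ ker g'. -/
import Mathlib



/-- Linear independence of two homomorphisms `f, g : G → F_p` over `F_p`. -/
def Indep (p : ℕ) {G : Type*} [AddCommGroup G] (f g : G →+ ZMod p) : Prop :=
  ∀ a b : ZMod p, (∀ x : G, a * f x + b * g x = 0) → a = 0 ∧ b = 0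

/-- If `[f' ∪ g'] = (σ, λ)·[f ∪ g] = [λ (f∘σ⁻¹) ∪ (g∘σ⁻¹)]` in `H²(G; F_p)` (with
`f, g` and `f', g'` linearly independent), then `σ(ker f ∩ ker g) = ker f' ∩ ker g'`. -/
theorem stmt18 (p : ℕ) [Fact p.Prime] (hodd : Odd p)
    (G : Type*) [AddCommGroup G] [Finite G]
    (hpG : ∀ g : G, ∃ k : ℕ, p ^ k • g = 0)
    (f g f' g' : G →+ ZMod p) (hfg : Indep p f g) (hfg' : Indep p f' g')
    (σ : G ≃+ G) (lam : (ZMod p)ˣ)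
    (hcls : ∃ h : G → ZMod p, ∀ x y : G,
        f' x * g' y
          = (lam : ZMod p) * (f (σ.symm x) * g (σ.symm y)) + (h y - h (x + y) + h x)) :
    AddSubgroup.map σ.toAddMonoidHom (f.ker ⊓ g.ker) = f'.ker ⊓ g'.ker := by
  obtain ⟨h, hc⟩ := hcls
  have key : ∀ x y : G, f' x * g' y - f' y * g' x
      = (lam : ZMod p) * (f (σ.symm x) * g (σ.symm y) - f (σ.symm y) * g (σ.symm x)) := by
    intro x y
    have h1 := hc x y
    have h2 := hc y x
    rw [add_comm y x] at h2
    linear_combination h1 - h2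
  have hlam : (lam : ZMod p) ≠ 0 := lam.ne_zero
  ext z
  simp only [AddSubgroup.mem_map, AddSubgroup.mem_inf, AddMonoidHom.mem_ker,
    AddEquiv.coe_toAddMonoidHom]
  constructor
  · rintro ⟨w, ⟨hfw, hgw⟩, rfl⟩
    have hw : σ.symm (σ w) = w := σ.symm_apply_apply w
    have hz : ∀ y : G, (-(g' (σ w))) * f' y + (f' (σ w)) * g' y = 0 := by
      intro y
      have hk := key (σ w) y
      rw [hw, hfw, hgw] at hk
      linear_combination hk
    obtain ⟨h1, h2⟩ := hfg' _ _ hz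
    exact ⟨h2, neg_eq_zero.mp h1⟩
  · rintro ⟨hf', hg'⟩
    refine ⟨σ.symm z, ⟨?_, ?_⟩, σ.apply_symm_apply z⟩ <;>
    · have hz : ∀ x : G, (-(g (σ.symm z))) * f x + (f (σ.symm z)) * g x = 0 := by
        intro x
        have hk := key z (σ x)
        rw [σ.symm_apply_apply, hf', hg'] at hk
        have : (lam : ZMod p) * (f (σ.symm z) * g x - f x * g (σ.symm z)) = 0 := by
          linear_combination -hk
        rcases mul_eq_zero.mp this with h0 | h0
        · exact absurd h0 hlam
        · linear_combination h0
      obtain ⟨h1, h2⟩ := hfg _ _ hz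
      first
        | exact h2
        | exact neg_eq_zero.mp h1
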